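/- Let s ∈ (0,1) and assume there exists t₀ > 0 such that ∫_{t₀}^{+∞} f(t)·t^{−2/(1−s)} dt < +∞. Then lim_{u→+∞} u^{s/(1−s)}·φ(u) = +∞ (equivalently, lim_{u→+∞} u·φ(u)^{(1−s)/s} = +∞). -/

import Mathlib

open MeasureTheory Filter Topology

/-- The antiderivative `F(t) = ∫₀ᵗ f(τ) dτ` of `f` vanishing at `0`. -/
noncomputable def Fant (f : ℝ → ℝ) (t : ℝ) : ℝ := ∫ τ in (0:ℝ)..t, f τ

/-- The function `φ(u) = ∫ᵤ^{+∞} dt/√(F(t))`. -/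
noncomputable def phi (f : ℝ → ℝ) (u : ℝ) : ℝ := ∫ t in Set.Ioi u, 1 / Real.sqrt (Fant f t)

/-- If `∫_{t₀}^∞ f(t)·t^{−2/(1−s)} dt < ∞` for some `t₀ > 0`,
then `u^{s/(1−s)}·φ(u) → +∞` as `u → +∞`. -/
theorem phi_weighted_blowup (f f' : ℝ → ℝ) (m M : ℝ) (hm : 0 < m) (hmM : m < M)
    (hf_nonneg : ∀ t, 0 ≤ t → 0 ≤ f t) (hf0 : f 0 = 0)
    (hf_pos : ∀ t, 0 < t → 0 < f t)
    (hf_mono : MonotoneOn f (Set.Ici 0))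
    (hf_deriv : ∀ t ∈ Set.Ici (0:ℝ), HasDerivWithinAt f (f' t) (Set.Ici 0) t)
    (hf'_cont : ContinuousOn f' (Set.Ici 0))
    (hcond : ∀ t, 0 < t → 1 + m ≤ t * f' t / f t ∧ t * f' t / f t ≤ 1 + M)
    (s : ℝ) (hs : s ∈ Set.Ioo (0:ℝ) 1)
    (hint : ∃ t₀ : ℝ, 0 < t₀ ∧
      IntegrableOn (fun t => f t * t ^ (-2 / (1 - s))) (Set.Ioi t₀)) :
    Tendsto (fun u : ℝ => u ^ (s / (1 - s)) * phi f u) atTop atTop := by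
  obtain ⟨hs0, hs1⟩ := hs
  obtain ⟨t₀, ht₀, hInt⟩ := hint
  have h1s : (0:ℝ) < 1 - s := by linarith
  set β : ℝ := 2 / (1 - s) with hβ
  have hβpos : 0 < β := by positivity
  have hβ1 : 1 < β := by
    rw [hβ, lt_div_iff₀ h1s]; linarith
  have hexp : -2 / (1 - s) = -β := by rw [hβ]; ring
  have hαβ : s / (1 - s) + 1 = β / 2 := by
    rw [hβ]
    field_simp
    ring
  -- continuity and differentiation of f
  have hf_cont : ContinuousOn f (Set.Ici 0) := fun t ht => (hf_deriv t ht).continuousWithinAt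
  have hfd : ∀ t : ℝ, 0 < t → HasDerivAt f (f' t) t := fun t ht =>
    (hf_deriv t ht.le).hasDerivAt (Ici_mem_nhds ht)
  -- growth of f : f t ≥ f 1 * t^(1+m) for t ≥ 1
  have hgrow : ∀ t : ℝ, 1 ≤ t → f 1 * t ^ (1 + m) ≤ f t := by
    have hmono : MonotoneOn (fun t : ℝ => f t * t ^ (-(1 + m))) (Set.Ici 1) := by
      apply monotoneOn_of_deriv_nonneg (convex_Ici 1)
      · apply ContinuousOn.mul (hf_cont.mono (Set.Ici_subset_Ici.mpr zero_le_one))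
        intro t ht
        have ht0 : (0:ℝ) < t := lt_of_lt_of_le one_pos ht
        exact (Real.continuousAt_rpow_const t _ (Or.inl ht0.ne')).continuousWithinAt
      · rw [interior_Ici]
        intro t ht
        have ht0 : (0:ℝ) < t := lt_trans one_pos ht
        exact ((hfd t ht0).mul (Real.hasDerivAt_rpow_const
          (Or.inl ht0.ne'))).differentiableAt.differentiableWithinAt
      · rw [interior_Ici]
        intro t ht
        have ht0 : (0:ℝ) < t := lt_trans one_pos ht
        have hD : HasDerivAt (fun t : ℝ => f t * t ^ (-(1 + m)))
            (f' t * t ^ (-(1 + m)) + f t * (-(1 + m) * t ^ (-(1 + m) - 1))) t :=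
          (hfd t ht0).mul (Real.hasDerivAt_rpow_const (Or.inl ht0.ne'))
        rw [hD.deriv]
        have hfp := hf_pos t ht0
        have h2 : (1 + m) * f t ≤ t * f' t := (le_div_iff₀ hfp).mp (hcond t ht0).1
        have hts : t ^ (-(1 + m)) = t ^ (-(1 + m) - 1) * t := by
          have h := Real.rpow_add_one ht0.ne' (-(1 + m) - 1)
          have he : (-(1 + m) - 1) + 1 = -(1 + m) := by ring
          rw [he] at h
          exact h
        have hre : f' t * t ^ (-(1 + m)) + f t * (-(1 + m) * t ^ (-(1 + m) - 1))
            = t ^ (-(1 + m) - 1) * (t * f' t - (1 + m) * f t) := by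
          rw [hts]; ring
        rw [hre]
        have hrp : (0:ℝ) ≤ t ^ (-(1 + m) - 1) := Real.rpow_nonneg ht0.le _
        nlinarith
    intro t ht
    have ht0 : (0:ℝ) < t := lt_of_lt_of_le one_pos ht
    have h := hmono Set.self_mem_Ici (Set.mem_Ici.mpr ht) ht
    simp only [Real.one_rpow, mul_one] at h
    have h' := mul_le_mul_of_nonneg_right h (Real.rpow_nonneg ht0.le (1 + m))
    calc f 1 * t ^ (1 + m) ≤ f t * t ^ (-(1 + m)) * t ^ (1 + m) := h'
      _ = f t := by
          rw [mul_assoc, ← Real.rpow_add ht0, show -(1 + m) + (1 + m) = (0:ℝ) by ring,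
            Real.rpow_zero, mul_one]
  -- interval integrability of f
  have hfII : ∀ a b : ℝ, 0 ≤ a → 0 ≤ b → IntervalIntegrable f volume a b := by
    intro a b ha hb
    apply ContinuousOn.intervalIntegrable
    apply hf_cont.mono
    intro x hx
    exact Set.mem_Ici.mpr (le_trans (le_min ha hb) hx.1)
  -- basic facts about F
  have hFsplit : ∀ a b : ℝ, 0 ≤ a → 0 ≤ b → Fant f b = Fant f a + ∫ τ in a..b, f τ := by
    intro a b ha hb
    rw [Fant, Fant]
    exact (intervalIntegral.integral_add_adjacent_intervals (hfII 0 a le_rfl ha)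
      (hfII a b ha hb)).symm
  have hintnn : ∀ a b : ℝ, 0 ≤ a → a ≤ b → 0 ≤ ∫ τ in a..b, f τ := fun a b ha hab =>
    intervalIntegral.integral_nonneg hab (fun x hx => hf_nonneg x (le_trans ha hx.1))
  have hFnonneg : ∀ t : ℝ, 0 ≤ t → 0 ≤ Fant f t := fun t ht => hintnn 0 t le_rfl ht
  have hFmono : ∀ a b : ℝ, 0 ≤ a → a ≤ b → Fant f a ≤ Fant f b := by
    intro a b ha hab
    rw [hFsplit a b ha (le_trans ha hab)]
    linarith [hintnn a b ha hab]
  have hFub : ∀ t : ℝ, 0 ≤ t → Fant f t ≤ t * f t := by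
    intro t ht
    have h := intervalIntegral.integral_mono_on (μ := volume) ht (hfII 0 t le_rfl ht)
      intervalIntegrable_const
      (fun x hx => hf_mono (Set.mem_Ici.mpr hx.1) (Set.mem_Ici.mpr ht) hx.2)
    rw [intervalIntegral.integral_const, smul_eq_mul, sub_zero] at h
    exact h
  have hFlb : ∀ t : ℝ, 0 ≤ t → t / 2 * f (t / 2) ≤ Fant f t := by
    intro t ht
    have h2 : (0:ℝ) ≤ t / 2 := by linarith
    have hle : t / 2 ≤ t := by linarith
    rw [hFsplit (t / 2) t h2 ht]
    have h := intervalIntegral.integral_mono_on (μ := volume) hle intervalIntegrable_const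
      (hfII (t / 2) t h2 ht)
      (fun x hx => hf_mono (Set.mem_Ici.mpr h2) (Set.mem_Ici.mpr (le_trans h2 hx.1)) hx.1)
    rw [intervalIntegral.integral_const, smul_eq_mul] at h
    have : t / 2 * f (t / 2) ≤ ∫ τ in (t / 2)..t, f τ := by
      calc t / 2 * f (t / 2) = (t - t / 2) * f (t / 2) := by ring
        _ ≤ _ := h
    linarith [hFnonneg (t / 2) h2]
  have hFpos : ∀ t : ℝ, 0 < t → 0 < Fant f t := fun t ht =>
    lt_of_lt_of_le (mul_pos (by linarith) (hf_pos _ (by linarith))) (hFlb t ht.le)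
  -- lower bound of F : F t ≥ c₁ * t^(2+m) for t ≥ 2
  have hf1 : 0 < f 1 := hf_pos 1 one_pos
  set c₁ : ℝ := f 1 / 2 ^ (2 + m : ℝ) with hc₁
  have hc₁pos : 0 < c₁ := div_pos hf1 (Real.rpow_pos_of_pos two_pos _)
  have hFlow : ∀ t : ℝ, 2 ≤ t → c₁ * t ^ (2 + m : ℝ) ≤ Fant f t := by
    intro t ht
    have ht0 : (0:ℝ) < t := by linarith
    have h12 : (1:ℝ) ≤ t / 2 := by linarith
    have hg := hgrow (t / 2) h12
    have hkey : c₁ * t ^ (2 + m : ℝ) = t / 2 * (f 1 * (t / 2) ^ (1 + m : ℝ)) := by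
      rw [hc₁]
      rw [Real.div_rpow ht0.le (by norm_num : (0:ℝ) ≤ 2)]
      have e1 : t ^ (2 + m : ℝ) = t ^ (1 + m : ℝ) * t := by
        have h := Real.rpow_add_one ht0.ne' (1 + m)
        have he : (1 + m) + 1 = 2 + m := by ring
        rw [he] at h
        exact h
      have e2 : (2:ℝ) ^ (2 + m : ℝ) = 2 ^ (1 + m : ℝ) * 2 := by
        have h := Real.rpow_add_one (two_ne_zero) (1 + m)
        have he : (1 + m) + 1 = 2 + m := by ring
        rw [he] at h
        exact h
      rw [e1, e2]
      have h2pos : (0:ℝ) < 2 ^ (1 + m : ℝ) := Real.rpow_pos_of_pos two_pos _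
      field_simp
    rw [hkey]
    calc t / 2 * (f 1 * (t / 2) ^ (1 + m : ℝ)) ≤ t / 2 * f (t / 2) := by
          apply mul_le_mul_of_nonneg_left hg (by linarith)
      _ ≤ Fant f t := hFlb t ht0.le
  -- continuity of 1/√F on (0,∞)
  have hFcontIcc : ∀ b : ℝ, ContinuousOn (Fant f) (Set.Icc 0 b) := by
    intro b
    rcases le_or_gt 0 b with hb | hb
    · have hi : IntegrableOn f (Set.Icc 0 b) :=
        (hf_cont.mono Set.Icc_subset_Ici_self).integrableOn_compact isCompact_Icc
      have h := intervalIntegral.continuousOn_primitive hi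
      exact h.congr fun y hy => by
        rw [Fant, intervalIntegral.integral_of_le hy.1]
    · rw [Set.Icc_eq_empty (not_le.mpr hb)]; exact continuousOn_empty _
  have hFcontAt : ∀ x : ℝ, 0 < x → ContinuousAt (Fant f) x := by
    intro x hx
    have h := hFcontIcc (x + 1) x ⟨hx.le, by linarith⟩
    exact h.continuousAt (Icc_mem_nhds (by linarith) (by linarith))
  have hOneDiv_cont : ContinuousOn (fun t : ℝ => 1 / Real.sqrt (Fant f t)) (Set.Ioi 0) := by
    intro t ht
    have ht0 : (0:ℝ) < t := ht
    have h1 : ContinuousAt (fun t : ℝ => Real.sqrt (Fant f t)) t :=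
      Real.continuous_sqrt.continuousAt.comp (hFcontAt t ht0)
    have h2 : ContinuousAt (fun t : ℝ => 1 / Real.sqrt (Fant f t)) t :=
      ContinuousAt.div continuousAt_const h1 (ne_of_gt (Real.sqrt_pos.mpr (hFpos t ht0)))
    exact h2.continuousWithinAt
  -- integrability of 1/√F on (u,∞) for u ≥ 2
  have hphi_int : ∀ u : ℝ, 2 ≤ u →
      IntegrableOn (fun t : ℝ => 1 / Real.sqrt (Fant f t)) (Set.Ioi u) := by
    intro u hu
    have hu0 : (0:ℝ) < u := by linarith
    have hmeas : AEStronglyMeasurable (fun t : ℝ => 1 / Real.sqrt (Fant f t))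
        (volume.restrict (Set.Ioi u)) :=
      (hOneDiv_cont.mono (Set.Ioi_subset_Ioi hu0.le)).aestronglyMeasurable measurableSet_Ioi
    have hexp2 : -((2 + m) / 2) < (-1 : ℝ) := by linarith
    have hdom : IntegrableOn
        (fun t : ℝ => (1 / Real.sqrt c₁) * t ^ (-((2 + m) / 2) : ℝ)) (Set.Ioi u) :=
      (integrableOn_Ioi_rpow_of_lt hexp2 hu0).const_mul _
    apply hdom.mono' hmeas
    rw [ae_restrict_iff' measurableSet_Ioi]
    apply ae_of_all
    intro t ht
    have ht2 : (2:ℝ) ≤ t := le_trans hu (le_of_lt ht)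
    have ht0 : (0:ℝ) < t := by linarith
    have hFt := hFlow t ht2
    rw [Real.norm_eq_abs, abs_of_nonneg (by positivity)]
    have hsqc : (0:ℝ) < Real.sqrt c₁ := Real.sqrt_pos.mpr hc₁pos
    have hrp : (0:ℝ) < t ^ ((2 + m) / 2 : ℝ) := Real.rpow_pos_of_pos ht0 _
    have hsq : Real.sqrt c₁ * t ^ ((2 + m) / 2 : ℝ) ≤ Real.sqrt (Fant f t) := by
      have h1 : Real.sqrt (c₁ * t ^ (2 + m : ℝ)) ≤ Real.sqrt (Fant f t) :=
        Real.sqrt_le_sqrt hFt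
      rw [Real.sqrt_mul hc₁pos.le] at h1
      have h2 : Real.sqrt (t ^ (2 + m : ℝ)) = t ^ ((2 + m) / 2 : ℝ) := by
        rw [Real.sqrt_eq_rpow, ← Real.rpow_mul ht0.le, mul_one_div]
      rw [h2] at h1
      exact h1
    calc 1 / Real.sqrt (Fant f t) ≤ 1 / (Real.sqrt c₁ * t ^ ((2 + m) / 2 : ℝ)) :=
          one_div_le_one_div_of_le (by positivity) hsq
      _ = (1 / Real.sqrt c₁) * t ^ (-((2 + m) / 2) : ℝ) := by
          rw [Real.rpow_neg ht0.le]
          field_simp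
  -- lower bound on phi : phi f u ≥ u / √(F(2u)) for u ≥ 2
  have hphi_ge : ∀ u : ℝ, 2 ≤ u → u / Real.sqrt (Fant f (2 * u)) ≤ phi f u := by
    intro u hu
    have hu0 : (0:ℝ) < u := by linarith
    have hF2u : 0 < Fant f (2 * u) := hFpos _ (by linarith)
    have hs2u : 0 < Real.sqrt (Fant f (2 * u)) := Real.sqrt_pos.mpr hF2u
    have hIioc : IntegrableOn (fun t : ℝ => 1 / Real.sqrt (Fant f t)) (Set.Ioc u (2 * u)) :=
      (hphi_int u hu).mono_set Set.Ioc_subset_Ioi_self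
    have h3 : ∫ t in Set.Ioc u (2 * u), (1 / Real.sqrt (Fant f (2 * u)))
        = u / Real.sqrt (Fant f (2 * u)) := by
      rw [setIntegral_const, Real.volume_real_Ioc_of_le (by linarith), smul_eq_mul,
        show 2 * u - u = u by ring, mul_one_div]
    have h1 : ∫ t in Set.Ioc u (2 * u), (1 / Real.sqrt (Fant f (2 * u)))
        ≤ ∫ t in Set.Ioc u (2 * u), 1 / Real.sqrt (Fant f t) := by
      apply setIntegral_mono_on (integrableOn_const measure_Ioc_lt_top.ne) hIioc
        measurableSet_Ioc
      intro x hx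
      apply one_div_le_one_div_of_le
      · exact Real.sqrt_pos.mpr (hFpos x (by linarith [hx.1]))
      · exact Real.sqrt_le_sqrt (hFmono x (2 * u) (by linarith [hx.1]) hx.2)
    have h2 : ∫ t in Set.Ioc u (2 * u), 1 / Real.sqrt (Fant f t) ≤ phi f u := by
      rw [phi]
      apply setIntegral_mono_set (hphi_int u hu)
      · exact Eventually.of_forall fun x => by positivity
      · exact HasSubset.Subset.eventuallyLE Set.Ioc_subset_Ioi_self
    linarith [h1, h2, h3.symm.le, h3.le]
  -- the tail integral T
  set g : ℝ → ℝ := fun t => f t * t ^ (-2 / (1 - s)) with hgdef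
  have hgInt : ∀ u : ℝ, t₀ ≤ u → IntegrableOn g (Set.Ioi u) := fun u hu =>
    hInt.mono_set (Set.Ioi_subset_Ioi hu)
  set T : ℝ → ℝ := fun u => ∫ t in Set.Ioi u, g t with hTdef
  have hTtend : Tendsto T atTop (𝓝 0) := by
    have h1 : Tendsto (fun u : ℝ => ∫ t in t₀..u, g t) atTop (𝓝 (∫ t in Set.Ioi t₀, g t)) :=
      intervalIntegral_tendsto_integral_Ioi t₀ hInt tendsto_id
    have h2 : ∀ᶠ u in atTop, (∫ t in Set.Ioi t₀, g t) - (∫ t in t₀..u, g t) = T u := by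
      filter_upwards [eventually_ge_atTop t₀] with u hu
      have hsplit : ∫ t in Set.Ioi t₀, g t
          = (∫ t in Set.Ioc t₀ u, g t) + ∫ t in Set.Ioi u, g t := by
        rw [← setIntegral_union (Set.Ioc_disjoint_Ioi le_rfl) measurableSet_Ioi
          (hInt.mono_set Set.Ioc_subset_Ioi_self) (hgInt u hu),
          Set.Ioc_union_Ioi_eq_Ioi hu]
      rw [intervalIntegral.integral_of_le hu]
      simp only [hTdef]
      linarith [hsplit]
    have h3 := h1.const_sub (∫ t in Set.Ioi t₀, g t)
    rw [sub_self] at h3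
    exact h3.congr' h2
  have hq0 : -2 / (1 - s) ≤ 0 := by
    apply div_nonpos_of_nonpos_of_nonneg <;> linarith
  -- lower bound for the tail
  have hTlb : ∀ v : ℝ, max t₀ 2 ≤ v → v * (f v * (2 * v) ^ (-2 / (1 - s))) ≤ T v := by
    intro v hv
    have hvt₀ : t₀ ≤ v := le_trans (le_max_left _ _) hv
    have hv2 : (2:ℝ) ≤ v := le_trans (le_max_right _ _) hv
    have hv0 : (0:ℝ) < v := by linarith
    have hIoc : IntegrableOn g (Set.Ioc v (2 * v)) :=
      (hgInt v hvt₀).mono_set Set.Ioc_subset_Ioi_self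
    have h3 : ∫ t in Set.Ioc v (2 * v), (f v * (2 * v) ^ (-2 / (1 - s)))
        = v * (f v * (2 * v) ^ (-2 / (1 - s))) := by
      rw [setIntegral_const, Real.volume_real_Ioc_of_le (by linarith), smul_eq_mul,
        show 2 * v - v = v by ring]
    have h1 : ∫ t in Set.Ioc v (2 * v), (f v * (2 * v) ^ (-2 / (1 - s)))
        ≤ ∫ t in Set.Ioc v (2 * v), g t := by
      apply setIntegral_mono_on (integrableOn_const measure_Ioc_lt_top.ne) hIoc
        measurableSet_Ioc
      intro x hx
      have hx0 : (0:ℝ) < x := by linarith [hx.1]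
      apply mul_le_mul
      · exact hf_mono (Set.mem_Ici.mpr hv0.le) (Set.mem_Ici.mpr hx0.le) hx.1.le
      · exact Real.rpow_le_rpow_of_nonpos hx0 hx.2 hq0
      · exact Real.rpow_nonneg (by linarith) _
      · exact hf_nonneg x hx0.le
    have h2 : ∫ t in Set.Ioc v (2 * v), g t ≤ T v := by
      apply setIntegral_mono_set (hgInt v hvt₀)
      · filter_upwards [ae_restrict_mem measurableSet_Ioi] with x hx
        have hx0 : (0:ℝ) < x := by linarith [Set.mem_Ioi.mp hx]
        exact mul_nonneg (hf_nonneg x hx0.le) (Real.rpow_nonneg hx0.le _)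
      · exact HasSubset.Subset.eventuallyLE Set.Ioc_subset_Ioi_self
    linarith [h1, h2, h3.symm.le, h3.le]
  have hTpos : ∀ v : ℝ, max t₀ 2 ≤ v → 0 < T v := by
    intro v hv
    have hv2 : (2:ℝ) ≤ v := le_trans (le_max_right _ _) hv
    have hv0 : (0:ℝ) < v := by linarith
    refine lt_of_lt_of_le ?_ (hTlb v hv)
    exact mul_pos hv0 (mul_pos (hf_pos v hv0) (Real.rpow_pos_of_pos (by linarith) _))
  -- the constant c₀
  set c₀ : ℝ := ((4:ℝ) ^ (β / 2 : ℝ))⁻¹ with hc₀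
  have hc₀pos : 0 < c₀ := inv_pos.mpr (Real.rpow_pos_of_pos (by norm_num) _)
  -- key eventual inequality
  have hkey : ∀ᶠ u in atTop, c₀ / Real.sqrt (T (2 * u)) ≤ u ^ (s / (1 - s)) * phi f u := by
    filter_upwards [eventually_ge_atTop (max t₀ 2)] with u hu
    have hu2 : (2:ℝ) ≤ u := le_trans (le_max_right _ _) hu
    have hu0 : (0:ℝ) < u := by linarith
    have h2u : max t₀ 2 ≤ 2 * u := le_trans hu (by linarith)
    have hF2u : (0:ℝ) < Fant f (2 * u) := hFpos _ (by linarith)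
    have hsF : (0:ℝ) < Real.sqrt (Fant f (2 * u)) := Real.sqrt_pos.mpr hF2u
    have hT2u : (0:ℝ) < T (2 * u) := hTpos _ h2u
    have hsT : (0:ℝ) < Real.sqrt (T (2 * u)) := Real.sqrt_pos.mpr hT2u
    -- F(2u) ≤ (4u)^β * T(2u)
    have hFB : Fant f (2 * u) ≤ (4 * u) ^ (β : ℝ) * T (2 * u) := by
      have htb := hTlb (2 * u) h2u
      have h4u : (2:ℝ) * (2 * u) = 4 * u := by ring
      rw [h4u, hexp] at htb
      have hrpow : (4 * u : ℝ) ^ (-β : ℝ) = ((4 * u : ℝ) ^ (β : ℝ))⁻¹ :=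
        Real.rpow_neg (by linarith) β
      rw [hrpow] at htb
      have hfub := hFub (2 * u) (by linarith)
      have h4β : (0:ℝ) < (4 * u : ℝ) ^ (β : ℝ) := Real.rpow_pos_of_pos (by linarith) β
      have hstep : 2 * u * f (2 * u) ≤ (4 * u) ^ (β : ℝ) * T (2 * u) := by
        have hmul := mul_le_mul_of_nonneg_left htb h4β.le
        calc 2 * u * f (2 * u)
            = (4 * u) ^ (β : ℝ) * (2 * u * (f (2 * u) * ((4 * u : ℝ) ^ (β : ℝ))⁻¹)) := by
              field_simp
          _ ≤ (4 * u) ^ (β : ℝ) * T (2 * u) := hmul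
      linarith
    have step1 : u ^ (s / (1 - s)) * (u / Real.sqrt (Fant f (2 * u)))
        ≤ u ^ (s / (1 - s)) * phi f u :=
      mul_le_mul_of_nonneg_left (hphi_ge u hu2) (Real.rpow_nonneg hu0.le _)
    have step2 : u ^ (s / (1 - s)) * (u / Real.sqrt (Fant f (2 * u)))
        = u ^ (β / 2 : ℝ) / Real.sqrt (Fant f (2 * u)) := by
      rw [← hαβ, Real.rpow_add hu0, Real.rpow_one]
      ring
    have hsqF : Real.sqrt (Fant f (2 * u))
        ≤ 4 ^ (β / 2 : ℝ) * u ^ (β / 2 : ℝ) * Real.sqrt (T (2 * u)) := by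
      have h1 : Real.sqrt (Fant f (2 * u)) ≤ Real.sqrt ((4 * u) ^ (β : ℝ) * T (2 * u)) :=
        Real.sqrt_le_sqrt hFB
      rw [Real.sqrt_mul (Real.rpow_nonneg (by linarith) β)] at h1
      have h2 : Real.sqrt ((4 * u : ℝ) ^ (β : ℝ)) = 4 ^ (β / 2 : ℝ) * u ^ (β / 2 : ℝ) := by
        rw [Real.sqrt_eq_rpow, ← Real.rpow_mul (by linarith : (0:ℝ) ≤ 4 * u),
          show β * (1 / 2) = β / 2 by ring,
          Real.mul_rpow (by norm_num : (0:ℝ) ≤ 4) hu0.le]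
      rw [h2] at h1
      exact h1
    have hden : (0:ℝ) < 4 ^ (β / 2 : ℝ) * u ^ (β / 2 : ℝ) * Real.sqrt (T (2 * u)) := by
      have h4 : (0:ℝ) < (4:ℝ) ^ (β / 2 : ℝ) := Real.rpow_pos_of_pos (by norm_num) _
      have hup : (0:ℝ) < u ^ (β / 2 : ℝ) := Real.rpow_pos_of_pos hu0 _
      positivity
    have step3 : u ^ (β / 2 : ℝ) / (4 ^ (β / 2 : ℝ) * u ^ (β / 2 : ℝ) * Real.sqrt (T (2 * u)))
        ≤ u ^ (β / 2 : ℝ) / Real.sqrt (Fant f (2 * u)) :=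
      div_le_div_of_nonneg_left (Real.rpow_nonneg hu0.le _) hsF hsqF
    have step4 : u ^ (β / 2 : ℝ) / (4 ^ (β / 2 : ℝ) * u ^ (β / 2 : ℝ) * Real.sqrt (T (2 * u)))
        = c₀ / Real.sqrt (T (2 * u)) := by
      have hup : (0:ℝ) < u ^ (β / 2 : ℝ) := Real.rpow_pos_of_pos hu0 _
      have h4 : (0:ℝ) < (4:ℝ) ^ (β / 2 : ℝ) := Real.rpow_pos_of_pos (by norm_num) _
      rw [hc₀]
      field_simp
    calc c₀ / Real.sqrt (T (2 * u))
        = u ^ (β / 2 : ℝ) / (4 ^ (β / 2 : ℝ) * u ^ (β / 2 : ℝ) * Real.sqrt (T (2 * u))) :=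
          step4.symm
      _ ≤ u ^ (β / 2 : ℝ) / Real.sqrt (Fant f (2 * u)) := step3
      _ = u ^ (s / (1 - s)) * (u / Real.sqrt (Fant f (2 * u))) := step2.symm
      _ ≤ u ^ (s / (1 - s)) * phi f u := step1
  -- the lower bound tends to infinity
  have hlow : Tendsto (fun u : ℝ => c₀ / Real.sqrt (T (2 * u))) atTop atTop := by
    have h2u : Tendsto (fun u : ℝ => 2 * u) atTop atTop :=
      tendsto_id.const_mul_atTop (by norm_num : (0:ℝ) < 2)
    have hT2 : Tendsto (fun u : ℝ => T (2 * u)) atTop (𝓝 0) := hTtend.comp h2u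
    have hsqrtT : Tendsto (fun u : ℝ => Real.sqrt (T (2 * u))) atTop (𝓝[>] (0:ℝ)) := by
      rw [tendsto_nhdsWithin_iff]
      constructor
      · have hc : Tendsto Real.sqrt (𝓝 0) (𝓝 0) := by
          have := Real.continuous_sqrt.tendsto 0
          simpa using this
        exact hc.comp hT2
      · filter_upwards [eventually_ge_atTop (max t₀ 2)] with u hu
        have h2u' : max t₀ 2 ≤ 2 * u := by
          have hu2 : (2:ℝ) ≤ u := le_trans (le_max_right _ _) hu
          exact le_trans hu (by linarith)
        exact Set.mem_Ioi.mpr (Real.sqrt_pos.mpr (hTpos _ h2u'))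
    have hinv : Tendsto (fun u : ℝ => (Real.sqrt (T (2 * u)))⁻¹) atTop atTop :=
      hsqrtT.inv_tendsto_nhdsGT_zero
    have := hinv.const_mul_atTop hc₀pos
    simpa [div_eq_mul_inv] using this
  exact tendsto_atTop_mono' atTop hkey hlow
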